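/- Let m, n, s, k be integers such that 2 ≤ s ≤ n, 2 ≤ k ≤ m and m·s = n·k, let c ≥ 1 and let Γ be a finite abelian group of order n·k·c. Then there exists a Γ-magic rectangle set MRS_Γ(m,n;s,k;c) in each of the following cases: (1) s ≡ k ≡ 0 (mod 4); (2) s ≡ 2 (mod 4) and k ≡ 0 (mod 4); (3) s ≡ 0 (mod 4) and k ≡ 2 (mod 4); (4) s ≡ k ≡ 2 (mod 4) and m ≡ n ≡ 0 (mod 2). -/

import Mathlib

open Finset

/-- A Γ-magic rectangle set `MRS_Γ(m,n;s,k;c)` on partially filled arrays. -/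
def IsPartialMRS {Γ : Type*} [AddCommGroup Γ] (m n s k c : ℕ)
    (A : Fin c → Fin m → Fin n → Option Γ) : Prop :=
  (∀ g : Γ, ∃! p : Fin c × Fin m × Fin n, A p.1 p.2.1 p.2.2 = some g) ∧
  (∀ t : Fin c, ∀ i : Fin m,
    (Finset.univ.filter fun j : Fin n => (A t i j).isSome).card = s) ∧
  (∀ t : Fin c, ∀ j : Fin n,
    (Finset.univ.filter fun i : Fin m => (A t i j).isSome).card = k) ∧
  ∃ ω δ : Γ,
    (∀ t : Fin c, ∀ i : Fin m, (∑ j : Fin n, (A t i j).getD 0) = ω) ∧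
    (∀ t : Fin c, ∀ j : Fin n, (∑ i : Fin m, (A t i j).getD 0) = δ)

open Function

/-!
Each array is tiled by `2 × 2` blocks `[[g, ι - g], [ι - g + θ, g + θ]]` with `θ + θ = 0`; every
block has row sums `ι` and column sums `ι + θ`. If `2x ∉ {ι, ι + θ}` for all `x`, the Klein
four-group generated by `g ↦ ι - g` and `g ↦ g + θ` acts freely on `Γ`, so `Γ` splits into the
entry sets of such blocks; suitable `ι, θ` exist as soon as `4 ∣ |Γ|`. It remains to place
`nk/4` disjoint blocks in an `m × n` array so that every row meets `s/2` and every column `k/2`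
of them. Consecutive blocks take consecutive pairs of columns, cyclically modulo `n`; their rows
are the pairs `(2u, 2u + 1)` when `m` is even, and the overlapping pairs `(u, u + 1)` modulo `m`
when `m` is odd, in which case `4 ∣ s`.
-/

theorem Nat.ModEq.eq_of_lt_add_of_lt_add {n a b : ℕ} (h : a ≡ b [MOD n]) (ha : a < b + n)
    (hb : b < a + n) : a = b :=
  h.eq_of_abs_lt (abs_sub_lt_iff.mpr ⟨by omega, by omega⟩)

theorem Nat.ModEq.add_le_add_of_lt_of_dvd {n a b L : ℕ} (h : a ≡ b [MOD n]) (hL : n ∣ L)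
    (ha : a < L) : a + n ≤ b + L := by
  by_contra hlt
  have hb : b ≡ b + L [MOD n] :=
    (Nat.modEq_iff_dvd' (Nat.le_add_right b L)).mpr (by rwa [Nat.add_sub_cancel_left])
  have := (h.trans hb).eq_of_lt_add_of_lt_add (by omega) (by omega)
  omega

theorem Nat.eq_or_eq_add_of_mod_eq_mod {n v w : ℕ} (hv : v ≤ n) (hw : w ≤ n)
    (h : v % n = w % n) : v = w ∨ v = w + n ∨ w = v + n := by
  rcases hv.lt_or_eq with hv | rfl <;> rcases hw.lt_or_eq with hw | rfl <;>
    simp_all [Nat.mod_eq_of_lt]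

theorem AddSubgroup.exists_notMem_and_add_notMem {G : Type*} [AddGroup G] [Finite G]
    (D : AddSubgroup G) (θ : G) (hD : 2 * Nat.card D < Nat.card G) :
    ∃ ι, ι ∉ D ∧ ι + θ ∉ D := by
  have hcard : ((D : Set G) ∪ (· + θ) ⁻¹' D).ncard < (Set.univ : Set G).ncard := by
    calc ((D : Set G) ∪ (· + θ) ⁻¹' D).ncard
        ≤ (D : Set G).ncard + ((· + θ) ⁻¹' (D : Set G)).ncard := Set.ncard_union_le _ _
      _ = 2 * Nat.card D := by
        rw [Set.ncard_preimage_of_injective_subset_range (add_left_injective θ)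
          (by rw [(add_right_surjective θ).range_eq]; exact Set.subset_univ _), ← two_mul]
        rfl
      _ < _ := by rwa [Set.ncard_univ]
  obtain ⟨ι, -, hι⟩ := Set.exists_mem_notMem_of_ncard_lt_ncard hcard
  exact ⟨ι, fun h => hι (Or.inl h), fun h => hι (Or.inr h)⟩

section Placement

variable {Γ : Type*} {m n c : ℕ} {P : Type*} [Fintype P]
  {cell : P → Fin m × Fin n} {val : Fin c × P → Γ}

noncomputable def placeArray (cell : P → Fin m × Fin n) (val : Fin c × P → Γ) :
    Fin c → Fin m → Fin n → Option Γ :=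
  fun t i j => extend cell (fun p => some (val (t, p))) (fun _ => none) (i, j)

variable (hcell : Injective cell)
include hcell

theorem placeArray_eq_some_iff {t : Fin c} {i : Fin m} {j : Fin n} {g : Γ} :
    placeArray cell val t i j = some g ↔ ∃ p, cell p = (i, j) ∧ val (t, p) = g := by
  by_cases h : ∃ p, cell p = (i, j)
  · obtain ⟨p, hp⟩ := h
    simp only [placeArray, ← hp, hcell.extend_apply, Option.some.injEq, hcell.eq_iff,
      exists_eq_left]
  · simp only [placeArray, extend_apply' _ _ _ h, reduceCtorEq, false_iff]
    exact fun ⟨p, hp, _⟩ => h ⟨p, hp⟩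

theorem isSome_placeArray {t : Fin c} {i : Fin m} {j : Fin n} :
    (placeArray cell val t i j).isSome ↔ ∃ p, cell p = (i, j) := by
  simp only [Option.isSome_iff_exists, placeArray_eq_some_iff hcell]
  exact ⟨fun ⟨_, p, hp, _⟩ => ⟨p, hp⟩, fun ⟨p, hp⟩ => ⟨_, p, hp, rfl⟩⟩

theorem card_isSome_placeArray_row (t : Fin c) (i : Fin m) :
    #{j | (placeArray cell val t i j).isSome} = #{p | (cell p).1 = i} := by
  refine (card_nbij (fun p => (cell p).2) (fun p hp => ?_) (fun p hp p' hp' h => ?_)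
    (fun j hj => ?_)).symm
  · simp only [coe_filter, mem_univ, true_and, Set.mem_ofPred_eq] at hp ⊢
    exact (isSome_placeArray hcell).2 ⟨p, Prod.ext hp rfl⟩
  · simp only [coe_filter, mem_univ, true_and, Set.mem_ofPred_eq] at hp hp'
    exact hcell (Prod.ext (hp.trans hp'.symm) h)
  · simp only [coe_filter, mem_univ, true_and, Set.mem_ofPred_eq] at hj
    obtain ⟨p, hp⟩ := (isSome_placeArray hcell).1 hj
    exact ⟨p, by simp [hp], by simp [hp]⟩

theorem card_isSome_placeArray_col (t : Fin c) (j : Fin n) :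
    #{i | (placeArray cell val t i j).isSome} = #{p | (cell p).2 = j} := by
  refine (card_nbij (fun p => (cell p).1) (fun p hp => ?_) (fun p hp p' hp' h => ?_)
    (fun i hi => ?_)).symm
  · simp only [coe_filter, mem_univ, true_and, Set.mem_ofPred_eq] at hp ⊢
    exact (isSome_placeArray hcell).2 ⟨p, Prod.ext rfl hp⟩
  · simp only [coe_filter, mem_univ, true_and, Set.mem_ofPred_eq] at hp hp'
    exact hcell (Prod.ext h (hp.trans hp'.symm))
  · simp only [coe_filter, mem_univ, true_and, Set.mem_ofPred_eq] at hi
    obtain ⟨p, hp⟩ := (isSome_placeArray hcell).1 hi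
    exact ⟨p, by simp [hp], by simp [hp]⟩

variable [AddCommMonoid Γ]

theorem getD_placeArray (t : Fin c) (i : Fin m) (j : Fin n) :
    (placeArray cell val t i j).getD 0 = ∑ p with cell p = (i, j), val (t, p) := by
  by_cases h : ∃ p, cell p = (i, j)
  · obtain ⟨p, hp⟩ := h
    have : ({p' | cell p' = (i, j)} : Finset P) = {p} := by
      ext p'; simp [← hp, hcell.eq_iff]
    rw [this, sum_singleton, (placeArray_eq_some_iff hcell).2 ⟨p, hp, rfl⟩, Option.getD_some]
  · have : ({p' | cell p' = (i, j)} : Finset P) = ∅ := by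
      ext p'; simpa using fun hp' => h ⟨p', hp'⟩
    rw [this, sum_empty, placeArray, extend_apply' _ _ _ h, Option.getD_none]

theorem sum_getD_placeArray_row (t : Fin c) (i : Fin m) :
    ∑ j, (placeArray cell val t i j).getD 0 = ∑ p with (cell p).1 = i, val (t, p) := by
  rw [← sum_fiberwise _ (fun p => (cell p).2)]
  refine sum_congr rfl fun j _ => ?_
  rw [getD_placeArray hcell, filter_filter]
  simp only [Prod.ext_iff]

theorem sum_getD_placeArray_col (t : Fin c) (j : Fin n) :
    ∑ i, (placeArray cell val t i j).getD 0 = ∑ p with (cell p).2 = j, val (t, p) := by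
  rw [← sum_fiberwise _ (fun p => (cell p).1)]
  refine sum_congr rfl fun i _ => ?_
  rw [getD_placeArray hcell, filter_filter]
  simp only [Prod.ext_iff, and_comm]

end Placement

theorem isPartialMRS_placeArray {Γ : Type*} [AddCommGroup Γ] {m n c s k : ℕ} {P : Type*}
    [Fintype P] {cell : P → Fin m × Fin n} {val : Fin c × P → Γ} (hcell : Injective cell)
    (hval : Bijective val)
    (hrow : ∀ i, #{p | (cell p).1 = i} = s) (hcol : ∀ j, #{p | (cell p).2 = j} = k)
    {ω δ : Γ} (hω : ∀ t i, ∑ p with (cell p).1 = i, val (t, p) = ω)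
    (hδ : ∀ t j, ∑ p with (cell p).2 = j, val (t, p) = δ) :
    IsPartialMRS m n s k c (placeArray cell val) := by
  refine ⟨fun g => ?_, fun t i => ?_, fun t j => ?_, ω, δ, fun t i => ?_, fun t j => ?_⟩
  · obtain ⟨⟨t, p⟩, rfl⟩ := hval.2 g
    refine ⟨(t, cell p), (placeArray_eq_some_iff hcell).2 ⟨p, rfl, rfl⟩, ?_⟩
    rintro ⟨t', i', j'⟩ h
    obtain ⟨p', hp', hv⟩ := (placeArray_eq_some_iff hcell).1 h
    obtain ⟨rfl, rfl⟩ := Prod.ext_iff.mp (hval.1 hv)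
    simp [hp']
  · rw [card_isSome_placeArray_row hcell, hrow]
  · rw [card_isSome_placeArray_col hcell, hcol]
  · rw [sum_getD_placeArray_row hcell, hω]
  · rw [sum_getD_placeArray_col hcell, hδ]

section Klein

variable {Γ : Type*} [AddCommGroup Γ] {ι θ : Γ}

def kleinBlock (ι θ g : Γ) : Fin 2 × Fin 2 → Γ
  | (0, 0) => g
  | (0, 1) => ι - g
  | (1, 0) => ι - g + θ
  | (1, 1) => g + θ

theorem kleinBlock_sum_row (hθ : θ + θ = 0) (g : Γ) (a : Fin 2) :
    ∑ d, kleinBlock ι θ g (a, d) = ι := by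
  fin_cases a
  · simp [kleinBlock]
  · simp only [kleinBlock, Fin.mk_one, Fin.isValue, Fin.sum_univ_two]
    linear_combination (norm := abel) hθ

theorem kleinBlock_sum_col (g : Γ) (d : Fin 2) : ∑ a, kleinBlock ι θ g (a, d) = ι + θ := by
  fin_cases d <;> simp [kleinBlock] <;> abel

theorem kleinBlock_kleinBlock (hθ : θ + θ = 0) (g : Γ) (v w : Fin 2 × Fin 2) :
    kleinBlock ι θ (kleinBlock ι θ g v) w = kleinBlock ι θ g (w + v) := by
  have h2 : (2 : ℤ) • θ = 0 := (two_zsmul θ).trans hθ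
  have hneg : -θ = θ := neg_eq_of_add_eq_zero_left hθ
  obtain ⟨a, d⟩ := v
  obtain ⟨a', d'⟩ := w
  fin_cases a <;> fin_cases d <;> fin_cases a' <;> fin_cases d' <;>
    simp [kleinBlock] <;> abel_nf <;> simp [h2, hneg]

theorem kleinBlock_eq_self (hθ0 : θ ≠ 0) (hι : ∀ x : Γ, x + x ≠ ι ∧ x + x ≠ ι + θ)
    {g : Γ} {v : Fin 2 × Fin 2} (h : kleinBlock ι θ g v = g) : v = 0 := by
  obtain ⟨a, d⟩ := v
  fin_cases a <;> fin_cases d <;> simp only [kleinBlock] at h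
  · rfl
  · exact absurd (by linear_combination (norm := abel) -h) (hι g).1
  · exact absurd (by linear_combination (norm := abel) -h) (hι g).2
  · exact absurd (by linear_combination (norm := abel) h) hθ0

abbrev kleinAction (ι : Γ) (hθ : θ + θ = 0) : AddAction (Fin 2 × Fin 2) Γ where
  vadd v g := kleinBlock ι θ g v
  zero_vadd _ := rfl
  add_vadd v w g := (kleinBlock_kleinBlock hθ g w v).symm

theorem exists_bijective_kleinBlock [Finite Γ] (hθ : θ + θ = 0) (hθ0 : θ ≠ 0)
    (hι : ∀ x : Γ, x + x ≠ ι ∧ x + x ≠ ι + θ) (I : Type*) [Finite I]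
    (hI : Nat.card Γ = 4 * Nat.card I) :
    ∃ W : I → Γ, Bijective fun y : I × Fin 2 × Fin 2 => kleinBlock ι θ (W y.1) y.2 := by
  let _ := kleinAction ι hθ
  let Q := Quotient (AddAction.orbitRel (Fin 2 × Fin 2) Γ)
  have hbij : Bijective fun y : Q × Fin 2 × Fin 2 => y.2 +ᵥ y.1.out := by
    constructor
    · rintro ⟨q, v⟩ ⟨q', v'⟩ (h : v +ᵥ q.out = v' +ᵥ q'.out)
      obtain rfl : q = q' := by
        rw [← Quotient.out_eq q, ← Quotient.out_eq q', Quotient.eq, AddAction.orbitRel_apply,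
          AddAction.mem_orbit_iff]
        exact ⟨-v + v', by rw [add_vadd, ← h, neg_vadd_vadd]⟩
      have hfix : (-v + v') +ᵥ q.out = q.out := by rw [add_vadd, ← h, neg_vadd_vadd]
      exact Prod.ext rfl (neg_add_eq_zero.mp (kleinBlock_eq_self hθ0 hι hfix))
    · intro g
      obtain ⟨v, hv⟩ := AddAction.mem_orbit_iff.mp
        (Quotient.mk_out (s := AddAction.orbitRel (Fin 2 × Fin 2) Γ) g)
      exact ⟨(Quotient.mk _ g, -v), (eq_neg_vadd_iff.mpr hv).symm⟩
  have hQ : Nat.card Q = Nat.card I := by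
    have := Nat.card_congr (Equiv.ofBijective _ hbij)
    rw [Nat.card_prod, Nat.card_prod, Nat.card_fin] at this
    omega
  obtain ⟨e⟩ := Finite.card_eq.mp hQ.symm
  exact ⟨fun i => (e i).out, hbij.comp (e.prodCongr (Equiv.refl _)).bijective⟩

/-- With `D = 2Γ` and `K` the `2`-torsion, `|K| |D| = |Γ|`. If `|K| > 2`, any `θ ∈ K` works
since `D ∪ (D - θ)` is too small to be all of `Γ`; otherwise `|D|` is even and `θ` can be
taken in `D`. -/
theorem exists_klein_parameters [Finite Γ] (h4 : 4 ∣ Nat.card Γ) :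
    ∃ ι θ : Γ, θ + θ = 0 ∧ θ ≠ 0 ∧ ∀ x : Γ, x + x ≠ ι ∧ x + x ≠ ι + θ := by
  let φ : Γ →+ Γ := nsmulAddMonoidHom 2
  have hφ (x : Γ) : φ x = x + x := two_nsmul x
  have hcard : Nat.card φ.ker * Nat.card φ.range = Nat.card Γ := by
    rw [← AddSubgroup.index_ker, AddSubgroup.card_mul_index]
  have hD : 0 < Nat.card φ.range := Nat.card_pos
  suffices ∃ θ : Γ, θ + θ = 0 ∧ θ ≠ 0 ∧ ∃ ι, ι ∉ φ.range ∧ ι + θ ∉ φ.range by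
    obtain ⟨θ, hθ, hθ0, ι, hι, hιθ⟩ := this
    exact ⟨ι, θ, hθ, hθ0, fun x => ⟨fun h => hι ⟨x, (hφ x).trans h⟩,
      fun h => hιθ ⟨x, (hφ x).trans h⟩⟩⟩
  by_cases hK : 2 < Nat.card φ.ker
  · obtain ⟨⟨θ, hθ⟩, hθ0⟩ := (AddSubgroup.ne_bot_iff_exists_ne_zero).mp
      ((AddSubgroup.one_lt_card_iff_ne_bot φ.ker).mp (by omega))
    refine ⟨θ, (hφ θ).symm.trans hθ, by simpa using hθ0, ?_⟩
    exact φ.range.exists_notMem_and_add_notMem θ (by nlinarith)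
  · have h2D : 2 ∣ Nat.card φ.range := by
      have : 0 < Nat.card φ.ker := Nat.card_pos
      rw [← hcard] at h4
      interval_cases Nat.card φ.ker <;> omega
    have : Fact (Nat.Prime 2) := ⟨Nat.prime_two⟩
    obtain ⟨⟨θ, hθD⟩, hθ⟩ := exists_prime_addOrderOf_dvd_card' 2 h2D
    obtain ⟨hθ2, hθ0⟩ := addOrderOf_eq_prime_iff.mp hθ
    have hθ2 : θ + θ = 0 := by simpa [two_nsmul] using congrArg Subtype.val hθ2
    have hθ0 : θ ≠ 0 := by simpa using hθ0
    have hφ_not_inj : ¬ Injective φ := fun h => hθ0 (h (by rw [hφ, hθ2, map_zero]))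
    obtain ⟨ι, hι⟩ : ∃ ι, ι ∉ φ.range := by
      simpa [Finite.injective_iff_surjective, Surjective] using hφ_not_inj
    refine ⟨θ, hθ2, hθ0, ι, hι, fun h => hι ?_⟩
    simpa using φ.range.sub_mem h hθD

end Klein

section Blocks

variable {B M : Type*} [Fintype B] [AddCommMonoid M]

theorem sum_filter_blockRow (q : B → Fin 2 → Prop) [∀ b a, Decidable (q b a)]
    (f : B × Fin 2 × Fin 2 → M) :
    ∑ z with q z.1 z.2.1, f z = ∑ w : B × Fin 2 with q w.1 w.2, ∑ d, f (w.1, w.2, d) := by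
  simp only [sum_filter, Fintype.sum_prod_type]
  refine sum_congr rfl fun b _ => sum_congr rfl fun a _ => ?_
  split_ifs <;> simp

theorem sum_filter_blockCol (q : B → Fin 2 → Prop) [∀ b a, Decidable (q b a)]
    (f : B × Fin 2 × Fin 2 → M) :
    ∑ z with q z.1 z.2.2, f z = ∑ w : B × Fin 2 with q w.1 w.2, ∑ a, f (w.1, a, w.2) := by
  simp only [sum_filter, Fintype.sum_prod_type]
  refine sum_congr rfl fun b _ => sum_comm.trans (sum_congr rfl fun d _ => ?_)
  split_ifs <;> simp

theorem exists_isPartialMRS_of_blocks {Γ : Type*} [AddCommGroup Γ] [Finite Γ] {m n c r q : ℕ}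
    (row : B → Fin 2 → Fin m) (col : B → Fin 2 → Fin n)
    (hcell : Injective fun z : B × Fin 2 × Fin 2 => (row z.1 z.2.1, col z.1 z.2.2))
    (hrow : ∀ i, #{w : B × Fin 2 | row w.1 w.2 = i} = r)
    (hcol : ∀ j, #{w : B × Fin 2 | col w.1 w.2 = j} = q)
    (hΓ : Nat.card Γ = 4 * (c * Fintype.card B)) :
    ∃ A : Fin c → Fin m → Fin n → Option Γ, IsPartialMRS m n (2 * r) (2 * q) c A := by
  obtain ⟨ι, θ, hθ, hθ0, hι⟩ := exists_klein_parameters (Γ := Γ) ⟨_, hΓ⟩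
  obtain ⟨W, hW⟩ := exists_bijective_kleinBlock hθ hθ0 hι (Fin c × B) (by simp [hΓ])
  refine ⟨_, isPartialMRS_placeArray
    (val := fun y : Fin c × B × Fin 2 × Fin 2 => kleinBlock ι θ (W (y.1, y.2.1)) y.2.2)
    hcell (hW.comp (Equiv.prodAssoc _ _ _).symm.bijective) (fun i => ?_) (fun j => ?_)
    (ω := r • ι) (δ := q • (ι + θ)) (fun t i => ?_) (fun t j => ?_)⟩
  · rw [card_eq_sum_ones, sum_filter_blockRow (fun b a => row b a = i)]
    simp [hrow, mul_comm]
  · rw [card_eq_sum_ones, sum_filter_blockCol (fun b d => col b d = j)]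
    simp [hcol, mul_comm]
  · rw [sum_filter_blockRow (fun b a => row b a = i)]
    simp only [kleinBlock_sum_row hθ, sum_const, hrow]
  · rw [sum_filter_blockCol (fun b d => col b d = j)]
    simp only [kleinBlock_sum_col, sum_const, hcol]

end Blocks

section Layout

variable {U H n : ℕ} [NeZero n]

def blockCol (n : ℕ) [NeZero n] (b : Fin U × Fin H) (d : Fin 2) : Fin n :=
  Fin.ofNat n (2 * (H * b.1 + b.2) + d)

theorem blockCol_eq_blockCol_iff {b b' : Fin U × Fin H} {d d' : Fin 2} :
    blockCol n b d = blockCol n b' d' ↔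
      2 * (H * b.1 + b.2) + d ≡ 2 * (H * b'.1 + b'.2) + d' [MOD n] := by
  simp [blockCol, Fin.ext_iff, Nat.ModEq]

theorem card_blockCol {D : ℕ} (hD : 2 * (U * H) = D * n) (j : Fin n) :
    #{w : (Fin U × Fin H) × Fin 2 | blockCol n w.1 w.2 = j} = D := by
  let e : (Fin U × Fin H) × Fin 2 ≃ Fin D × Fin n :=
    ((finProdFinEquiv.prodCongr (Equiv.refl _)).trans finProdFinEquiv).trans
      ((finCongr (by rw [← hD]; ring)).trans finProdFinEquiv.symm)
  have he (w) : (e w).2 = blockCol n w.1 w.2 := by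
    ext
    simp [e, blockCol, finProdFinEquiv_apply_val, add_comm]
  rw [card_equiv (t := {z | z.2 = j}) e (by simp [he]),
    show ({z | z.2 = j} : Finset (Fin D × Fin n)) = univ ×ˢ {j} by ext ⟨q, r⟩; simp [eq_comm]]
  simp

theorem card_filter_rowGroup {α : Type*} [DecidableEq α] (f : Fin U → Fin 2 → α) (i : α) :
    #{w : (Fin U × Fin H) × Fin 2 | f w.1.1 w.2 = i} =
      H * #{v : Fin U × Fin 2 | f v.1 v.2 = i} := by
  simp only [card_filter, Fintype.sum_prod_type]
  simp [mul_sum]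

def pairedRow (u : Fin U) (a : Fin 2) : Fin (U * 2) := finProdFinEquiv (u, a)

theorem card_pairedRow (i : Fin (U * 2)) : #{v : Fin U × Fin 2 | pairedRow v.1 v.2 = i} = 1 := by
  rw [card_eq_one]
  refine ⟨finProdFinEquiv.symm i, ?_⟩
  ext v
  rw [mem_filter, mem_singleton, pairedRow, Equiv.eq_symm_apply]
  simp

theorem pairedRow_blockCol_injective (h2H : 2 * H ≤ n) :
    Injective fun z : (Fin U × Fin H) × Fin 2 × Fin 2 =>
      (pairedRow z.1.1 z.2.1, blockCol n z.1 z.2.2) := by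
  rintro ⟨⟨u, h⟩, a, d⟩ ⟨⟨u', h'⟩, a', d'⟩ heq
  simp only [Prod.mk.injEq, pairedRow, EmbeddingLike.apply_eq_iff_eq] at heq
  obtain ⟨⟨rfl, rfl⟩, hcol⟩ := heq
  have hmod := blockCol_eq_blockCol_iff.mp hcol
  dsimp only at hmod
  have := hmod.eq_of_lt_add_of_lt_add (by omega) (by omega)
  simp only [Prod.mk.injEq, Fin.ext_iff, true_and]
  omega

theorem exists_isPartialMRS_paired {Γ : Type*} [AddCommGroup Γ] [Finite Γ] {D c : ℕ}
    (h2H : 2 * H ≤ n) (hD : 2 * (U * H) = D * n) (hΓ : Nat.card Γ = 4 * (c * (U * H))) :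
    ∃ A : Fin c → Fin (U * 2) → Fin n → Option Γ, IsPartialMRS (U * 2) n (2 * H) (2 * D) c A :=
  exists_isPartialMRS_of_blocks (fun b a => pairedRow b.1 a) (blockCol n)
    (pairedRow_blockCol_injective h2H)
    (fun i => by rw [card_filter_rowGroup pairedRow i, card_pairedRow, mul_one])
    (card_blockCol hD) (by simpa using hΓ)

def cyclicRow [NeZero U] (u : Fin U) (a : Fin 2) : Fin U := u + Fin.ofNat U a

theorem card_cyclicRow [NeZero U] (i : Fin U) :
    #{v : Fin U × Fin 2 | cyclicRow v.1 v.2 = i} = 2 := by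
  rw [show ({v | cyclicRow v.1 v.2 = i} : Finset (Fin U × Fin 2)) =
      univ.map ⟨fun a : Fin 2 => (i - Fin.ofNat U a, a), fun a a' h => (Prod.ext_iff.mp h).2⟩ by
    ext ⟨u, a⟩
    rw [mem_filter, mem_map]
    simp only [mem_univ, cyclicRow, Fin.ofNat_eq_cast, true_and, Embedding.coeFn_mk,
      Prod.mk.injEq, exists_eq_right]
    rw [sub_eq_iff_eq_add, eq_comm]]
  simp

theorem cyclicRow_blockCol_injective [NeZero U] (hU : 2 ≤ U) (h4H : 4 * H ≤ n)
    (hn : n ∣ 2 * (U * H)) :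
    Injective fun z : (Fin U × Fin H) × Fin 2 × Fin 2 =>
      (cyclicRow z.1.1 z.2.1, blockCol n z.1 z.2.2) := by
  rintro ⟨⟨u, h⟩, a, d⟩ ⟨⟨u', h'⟩, a', d'⟩ heq
  simp only [Prod.mk.injEq] at heq
  obtain ⟨hrow, hcol⟩ := heq
  have hmod := blockCol_eq_blockCol_iff.mp hcol
  dsimp only at hmod
  have hrow : ((u : ℕ) + a) % U = ((u' : ℕ) + a') % U := by
    simpa [cyclicRow, Fin.ext_iff, Fin.val_add, Nat.mod_eq_of_lt (a.isLt.trans_le hU),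
      Nat.mod_eq_of_lt (a'.isLt.trans_le hU)] using hrow
  have hp : 2 * (H * u + h) + d < 2 * (U * H) := by nlinarith [u.isLt, h.isLt, d.isLt]
  have hp' : 2 * (H * u' + h') + d' < 2 * (U * H) := by nlinarith [u'.isLt, h'.isLt, d'.isLt]
  rcases Nat.eq_or_eq_add_of_mod_eq_mod (by omega) (by omega) hrow with hr | hr | hr
  · rcases (show (u' : ℕ) = u ∨ (u' : ℕ) = u + 1 ∨ (u : ℕ) = u' + 1 by omega) with hu | hu | hu
    · have hHu : H * (u' : ℕ) = H * u := by rw [hu]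
      have := hmod.eq_of_lt_add_of_lt_add (by omega) (by omega)
      simp only [Prod.mk.injEq, Fin.ext_iff]
      omega
    · have hHu : H * (u' : ℕ) = H * u + H := by rw [hu, mul_add_one]
      have := hmod.eq_of_lt_add_of_lt_add (by omega) (by omega)
      omega
    · have hHu : H * (u : ℕ) = H * u' + H := by rw [hu, mul_add_one]
      have := hmod.eq_of_lt_add_of_lt_add (by omega) (by omega)
      omega
  · have hHu : H * (u : ℕ) + H = U * H := by rw [← mul_add_one, mul_comm]; congr; omega
    have hHu' : H * (u' : ℕ) = 0 := by rw [show (u' : ℕ) = 0 by omega, mul_zero]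
    have := hmod.add_le_add_of_lt_of_dvd hn hp
    omega
  · have hHu : H * (u' : ℕ) + H = U * H := by rw [← mul_add_one, mul_comm]; congr; omega
    have hHu' : H * (u : ℕ) = 0 := by rw [show (u : ℕ) = 0 by omega, mul_zero]
    have := hmod.symm.add_le_add_of_lt_of_dvd hn hp'
    omega

theorem exists_isPartialMRS_cyclic {Γ : Type*} [AddCommGroup Γ] [Finite Γ] {D c : ℕ}
    (hU : 2 ≤ U) (h4H : 4 * H ≤ n) (hD : 2 * (U * H) = D * n)
    (hΓ : Nat.card Γ = 4 * (c * (U * H))) :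
    ∃ A : Fin c → Fin U → Fin n → Option Γ, IsPartialMRS U n (4 * H) (2 * D) c A := by
  have : NeZero U := ⟨by omega⟩
  rw [show 4 * H = 2 * (H * 2) by ring]
  exact exists_isPartialMRS_of_blocks (fun b a => cyclicRow b.1 a) (blockCol n)
    (cyclicRow_blockCol_injective hU h4H ⟨D, by rw [hD, mul_comm]⟩)
    (fun i => by rw [card_filter_rowGroup cyclicRow i, card_cyclicRow])
    (card_blockCol hD) (by simpa using hΓ)

end Layout

theorem stmt18_general (m n s k c : ℕ) (hs : 2 ≤ s) (hsn : s ≤ n) (hk : 2 ≤ k) (hkm : k ≤ m)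
    (heq : m * s = n * k)
    (Γ : Type*) [AddCommGroup Γ] [Fintype Γ] (hcard : Fintype.card Γ = n * k * c)
    (hcases :
      (s % 4 = 0 ∧ k % 4 = 0) ∨
      (s % 4 = 2 ∧ k % 4 = 0) ∨
      (s % 4 = 0 ∧ k % 4 = 2) ∨
      (s % 4 = 2 ∧ k % 4 = 2 ∧ m % 2 = 0 ∧ n % 2 = 0)) :
    ∃ A : Fin c → Fin m → Fin n → Option Γ, IsPartialMRS m n s k c A := by
  have : NeZero n := ⟨by omega⟩
  have h4 : 4 ∣ m * s := by
    rcases hcases with ⟨hs4, -⟩ | ⟨-, hk4⟩ | ⟨hs4, -⟩ | ⟨hs2, -, hm2, -⟩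
    · exact dvd_mul_of_dvd_right (show 4 ∣ s by omega) m
    · exact heq ▸ dvd_mul_of_dvd_right (show 4 ∣ k by omega) n
    · exact dvd_mul_of_dvd_right (show 4 ∣ s by omega) m
    · exact mul_dvd_mul (show 2 ∣ m by omega) (show 2 ∣ s by omega)
  obtain ⟨D, rfl⟩ : ∃ D, k = 2 * D := ⟨k / 2, by omega⟩
  rw [← Nat.card_eq_fintype_card] at hcard
  by_cases hm : 2 ∣ m
  · obtain ⟨U, rfl⟩ : ∃ U, m = U * 2 := ⟨m / 2, by omega⟩
    obtain ⟨H, rfl⟩ : ∃ H, s = 2 * H := ⟨s / 2, by omega⟩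
    exact exists_isPartialMRS_paired hsn (by linarith) (by rw [hcard, ← heq]; ring)
  · have hm4 : Nat.Coprime 4 m :=
      Nat.Coprime.pow_left 2 (Nat.coprime_two_left.mpr (Nat.odd_iff.mpr (by omega)))
    obtain ⟨H, rfl⟩ := hm4.dvd_of_dvd_mul_left h4
    exact exists_isPartialMRS_cyclic (by omega) hsn (by linarith) (by rw [hcard, ← heq]; ring)

/-- Let `2 ≤ s ≤ n`, `2 ≤ k ≤ m`, `m·s = n·k`, `c ≥ 1` and let `Γ` be an abelian group of
order `n·k·c`. There exists an `MRS_Γ(m,n;s,k;c)` in each of the following cases: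
(1) `s ≡ k ≡ 0 (mod 4)`; (2) `s ≡ 2 (mod 4)` and `k ≡ 0 (mod 4)`;
(3) `s ≡ 0 (mod 4)` and `k ≡ 2 (mod 4)`;
(4) `s ≡ k ≡ 2 (mod 4)` and `m ≡ n ≡ 0 (mod 2)`. -/
theorem stmt18 (m n s k c : ℕ) (hs : 2 ≤ s) (hsn : s ≤ n) (hk : 2 ≤ k) (hkm : k ≤ m)
    (heq : m * s = n * k) (hc : 1 ≤ c)
    (Γ : Type*) [AddCommGroup Γ] [Fintype Γ] (hcard : Fintype.card Γ = n * k * c)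
    (hcases :
      (s % 4 = 0 ∧ k % 4 = 0) ∨
      (s % 4 = 2 ∧ k % 4 = 0) ∨
      (s % 4 = 0 ∧ k % 4 = 2) ∨
      (s % 4 = 2 ∧ k % 4 = 2 ∧ m % 2 = 0 ∧ n % 2 = 0)) :
    ∃ A : Fin c → Fin m → Fin n → Option Γ, IsPartialMRS m n s k c A :=
  stmt18_general m n s k c hs hsn hk hkm heq Γ hcard hcases
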